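/- arXiv:1201.4334 — 3 statements merged into one kernel-verified Lean document; each statement's English description precedes it below -/
import Mathlib

section
/- There is no binary self-dual [48,24,10] code with an automorphism of order 23 with two 23-cycles and two fixed points, given that the number of weight-10 codewords is 704 or 768. (Proof idea: the fixed subcode F_σ(C), viewed via projection onto cycle/fixed-point coordinates, is a self-dual code of length 4, so every nonzero word of F_σ(C) has weight that is a sum of values from {23, 23, 1, 1} with an even number of terms; in particular F_σ(C) has no word of weight i for 0 < i < 24, so it has no weight-10 word, contradicting A_10 ≡ B_10 (mod 23) since 23 divides neither 704 nor 768.) -/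
open Finset

/-- Hamming weight of a binary vector. -/
def wt {ι : Type*} [Fintype ι] (v : ι → ZMod 2) : ℕ :=
  (Finset.univ.filter fun i => v i ≠ 0).card

/-- Dual of a binary code under the standard dot product. -/
def dualCode {ι : Type*} [Fintype ι] (C : Submodule (ZMod 2) (ι → ZMod 2)) :
    Submodule (ZMod 2) (ι → ZMod 2) where
  carrier := {x | ∀ c ∈ C, ∑ i, x i * c i = 0}
  add_mem' := by
    intro a b ha hb c hc
    have := ha c hc; have := hb c hc
    simp only [Pi.add_apply, add_mul, Finset.sum_add_distrib]
    simp [ha c hc, hb c hc]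
  zero_mem' := by intro c hc; simp
  smul_mem' := by
    intro r a ha c hc
    simp only [Pi.smul_apply, smul_eq_mul, mul_assoc, ← Finset.mul_sum]
    simp [ha c hc]

/-- Fixed subcode F_σ(C). -/
def fixedCode {ι : Type*} (σ : Equiv.Perm ι) (C : Submodule (ZMod 2) (ι → ZMod 2)) :
    Submodule (ZMod 2) (ι → ZMod 2) where
  carrier := {v | v ∈ C ∧ v ∘ σ = v}
  add_mem' := by
    rintro a b ⟨ha, ha'⟩ ⟨hb, hb'⟩
    refine ⟨C.add_mem ha hb, ?_⟩
    funext i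
    simpa using congrFun (congrArg₂ (· + ·) ha' hb') i
  zero_mem' := ⟨C.zero_mem, rfl⟩
  smul_mem' := by
    rintro r a ⟨ha, ha'⟩
    exact ⟨C.smul_mem r ha, by funext i; simpa using congrArg (r • ·) (congrFun ha' i)⟩

/-- Subcode E_σ(C): codewords with even weight on each cycle (and zero on fixed points). -/
def evenCode {ι : Type*} (p : ℕ) (σ : Equiv.Perm ι) (C : Submodule (ZMod 2) (ι → ZMod 2)) :
    Submodule (ZMod 2) (ι → ZMod 2) where
  carrier := {v | v ∈ C ∧ ∀ i, ∑ k ∈ Finset.range p, v ((σ ^ k) i) = 0}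
  add_mem' := by
    rintro a b ⟨ha, ha'⟩ ⟨hb, hb'⟩
    refine ⟨C.add_mem ha hb, fun i => ?_⟩
    simp [Finset.sum_add_distrib, ha' i, hb' i]
  zero_mem' := ⟨C.zero_mem, by simp⟩
  smul_mem' := by
    rintro r a ⟨ha, ha'⟩
    refine ⟨C.smul_mem r ha, fun i => ?_⟩
    simp only [Pi.smul_apply, smul_eq_mul]
    rw [← Finset.mul_sum, ha' i, mul_zero]

section Aux

open Function

/-- Weight is invariant under composition with a permutation. -/
lemma wt_comp_perm {ι : Type*} [Fintype ι] (v : ι → ZMod 2) (e : Equiv.Perm ι) :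
    wt (v ∘ e) = wt v := by
  classical
  unfold wt
  apply Finset.card_bij (fun i _ => e i)
  · intro a ha
    simp only [Finset.mem_filter, Finset.mem_univ, true_and] at ha ⊢
    exact ha
  · intro a _ b _ h; exact e.injective h
  · intro b hb
    refine ⟨e.symm b, ?_, by simp⟩
    simpa [Finset.mem_filter] using (by simpa [Finset.mem_filter] using hb : v b ≠ 0)

/-- If a point is fixed by `σ^m` for `0 < m <` the prime order of `σ`, it is fixed by `σ`. -/
lemma fixed_of_pow_fixed {ι : Type*} (σ : Equiv.Perm ι) (hord : orderOf σ = 23)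
    (j : ι) (m : ℕ) (hm0 : 0 < m) (hm : m < 23) (h : (σ ^ m) j = j) : σ j = j := by
  have hp : Function.IsPeriodicPt σ m j := by
    rw [Function.IsPeriodicPt, Equiv.Perm.iterate_eq_pow]
    exact h
  have hp23 : Function.IsPeriodicPt σ 23 j := by
    rw [Function.IsPeriodicPt, Equiv.Perm.iterate_eq_pow, ← hord, pow_orderOf_eq_one]
    rfl
  have hd1 : Function.minimalPeriod σ j ∣ m := hp.minimalPeriod_dvd
  have hd2 : Function.minimalPeriod σ j ∣ 23 := hp23.minimalPeriod_dvd
  have hne : Function.minimalPeriod σ j ≠ 23 := by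
    intro hEq
    have := Nat.le_of_dvd hm0 (hEq ▸ hd1)
    omega
  have h23 : Nat.Prime 23 := by norm_num
  rcases (Nat.dvd_prime h23).1 hd2 with h1 | h1
  · exact Function.minimalPeriod_eq_one_iff_isFixedPt.1 h1
  · exact absurd h1 hne

end Aux

/-- There is no binary self-dual [48,24,10] code (whose number of weight-10 words is
704 or 768) with an automorphism of order 23 having two 23-cycles and two fixed points. -/
theorem statement3
    (C : Submodule (ZMod 2) (Fin 48 → ZMod 2))
    (hself : C = dualCode C)
    (hdim : Module.finrank (ZMod 2) C = 24)
    (hmin : ∀ v ∈ C, v ≠ 0 → 10 ≤ wt v)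
    (hA10 : Set.ncard {v | v ∈ C ∧ wt v = 10} = 704 ∨
            Set.ncard {v | v ∈ C ∧ wt v = 10} = 768)
    (σ : Equiv.Perm (Fin 48))
    (haut : ∀ v, v ∈ C ↔ v ∘ σ ∈ C)
    (hord : orderOf σ = 23)
    (hfix : (Finset.univ.filter fun i => σ i = i).card = 2) :
    False := by
  classical
  -- iterated automorphism
  have hautpow : ∀ (v : Fin 48 → ZMod 2) (k : ℕ), v ∈ C → v ∘ ⇑(σ ^ k) ∈ C := by
    intro v k hv
    induction k with
    | zero => simpa using hv
    | succ n ih =>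
      have hmem : (v ∘ ⇑(σ ^ n)) ∘ ⇑σ ∈ C := (haut _).1 ih
      have heq : v ∘ ⇑(σ ^ (n + 1)) = (v ∘ ⇑(σ ^ n)) ∘ ⇑σ := by
        funext x
        simp [pow_succ, Equiv.Perm.mul_apply, Function.comp]
      rw [heq]
      exact hmem
  -- no σ-fixed weight-10 codeword
  have hnofix : ∀ v : Fin 48 → ZMod 2, wt v = 10 → v ∘ ⇑σ ≠ v := by
    intro v hw hfixv
    have hk : ∀ k : ℕ, v ∘ ⇑(σ ^ k) = v := by
      intro k
      induction k with
      | zero => simp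
      | succ n ih =>
        funext x
        have h2 : v ((σ ^ n) (σ x)) = v (σ x) := congrFun ih (σ x)
        have h1 : v (σ x) = v x := congrFun hfixv x
        simpa [pow_succ, Equiv.Perm.mul_apply, Function.comp] using h2.trans h1
    by_cases hex : ∃ i, v i ≠ 0 ∧ σ i ≠ i
    · -- support contains a full 23-cycle, so wt v ≥ 23
      obtain ⟨i, hvi, hsi⟩ := hex
      have hinj : Function.Injective (fun k : Fin 23 => (σ ^ (k : ℕ)) i) := by
        intro a b hab
        by_contra hne
        rcases Nat.lt_or_ge (a : ℕ) (b : ℕ) with hlt | hge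
        · -- σ^(b-a) fixes σ^a i
          have : (σ ^ ((b : ℕ) - (a : ℕ))) ((σ ^ (a : ℕ)) i) = (σ ^ (a : ℕ)) i := by
            have : (σ ^ ((b : ℕ) - (a : ℕ)) * σ ^ (a : ℕ)) i = (σ ^ (a : ℕ)) i := by
              rw [← pow_add]
              have : (b : ℕ) - (a : ℕ) + (a : ℕ) = (b : ℕ) := by omega
              rw [this]; exact hab.symm
            simpa [Equiv.Perm.mul_apply] using this
          have hfj : σ ((σ ^ (a : ℕ)) i) = (σ ^ (a : ℕ)) i :=
            fixed_of_pow_fixed σ hord _ _ (by omega) (by have := b.isLt; omega) this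
          -- deduce σ i = i
          have : (σ ^ (a : ℕ)) (σ i) = (σ ^ (a : ℕ)) i := by
            have hc : σ ((σ ^ (a : ℕ)) i) = (σ ^ (a : ℕ)) (σ i) := by
              simp only [← Equiv.Perm.mul_apply, ← pow_succ, ← pow_succ']
            rw [← hc]; exact hfj
          exact hsi ((σ ^ (a : ℕ)).injective this)
        · have hlt' : (b : ℕ) < (a : ℕ) := by
            rcases lt_or_eq_of_le hge with h | h
            · exact h
            · exact absurd (Fin.ext h.symm) hne
          have : (σ ^ ((a : ℕ) - (b : ℕ))) ((σ ^ (b : ℕ)) i) = (σ ^ (b : ℕ)) i := by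
            have : (σ ^ ((a : ℕ) - (b : ℕ)) * σ ^ (b : ℕ)) i = (σ ^ (b : ℕ)) i := by
              rw [← pow_add]
              have : (a : ℕ) - (b : ℕ) + (b : ℕ) = (a : ℕ) := by omega
              rw [this]; exact hab
            simpa [Equiv.Perm.mul_apply] using this
          have hfj : σ ((σ ^ (b : ℕ)) i) = (σ ^ (b : ℕ)) i :=
            fixed_of_pow_fixed σ hord _ _ (by omega) (by have := a.isLt; omega) this
          have : (σ ^ (b : ℕ)) (σ i) = (σ ^ (b : ℕ)) i := by
            have hc : σ ((σ ^ (b : ℕ)) i) = (σ ^ (b : ℕ)) (σ i) := by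
              simp only [← Equiv.Perm.mul_apply, ← pow_succ, ← pow_succ']
            rw [← hc]; exact hfj
          exact hsi ((σ ^ (b : ℕ)).injective this)
      have hsub : (Finset.univ.image fun k : Fin 23 => (σ ^ (k : ℕ)) i) ⊆
          Finset.univ.filter fun j => v j ≠ 0 := by
        intro x hx
        simp only [Finset.mem_image, Finset.mem_univ, true_and] at hx
        obtain ⟨k, rfl⟩ := hx
        simp only [Finset.mem_filter, Finset.mem_univ, true_and]
        have := congrFun (hk (k : ℕ)) i
        simp only [Function.comp] at this
        rw [this]; exact hvi
      have h23 : 23 ≤ wt v := by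
        have := Finset.card_le_card hsub
        rwa [Finset.card_image_of_injective _ hinj, Finset.card_univ, Fintype.card_fin] at this
      omega
    · -- support consists only of fixed points, so wt v ≤ 2
      push_neg at hex
      have hsub : (Finset.univ.filter fun j => v j ≠ 0) ⊆
          Finset.univ.filter fun j => σ j = j := by
        intro x hx
        simp only [Finset.mem_filter, Finset.mem_univ, true_and] at hx ⊢
        exact hex x hx
      have := Finset.card_le_card hsub
      rw [hfix] at this
      have : wt v ≤ 2 := this
      omega
  -- group action of Multiplicative (ZMod 23) on weight-10 codewords
  haveI : Fact (Nat.Prime 23) := ⟨by norm_num⟩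
  set α := {v : Fin 48 → ZMod 2 // v ∈ C ∧ wt v = 10} with hα
  letI : SMul (Multiplicative (ZMod 23)) α :=
    ⟨fun g v => ⟨v.1 ∘ ⇑(σ ^ (Multiplicative.toAdd g).val),
      hautpow v.1 _ v.2.1, by rw [wt_comp_perm]; exact v.2.2⟩⟩
  letI : MulAction (Multiplicative (ZMod 23)) α :=
    { one_smul := by
        intro v
        apply Subtype.ext
        show v.1 ∘ ⇑(σ ^ (Multiplicative.toAdd (1 : Multiplicative (ZMod 23))).val) = v.1
        simp
      mul_smul := by
        intro a b v
        apply Subtype.ext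
        show v.1 ∘ ⇑(σ ^ (Multiplicative.toAdd (a * b)).val) =
          (v.1 ∘ ⇑(σ ^ (Multiplicative.toAdd b).val)) ∘ ⇑(σ ^ (Multiplicative.toAdd a).val)
        have h1 : (Multiplicative.toAdd (a * b)).val =
            ((Multiplicative.toAdd a).val + (Multiplicative.toAdd b).val) % 23 := by
          rw [toAdd_mul, ZMod.val_add]
        funext x
        have h2 : σ ^ (((Multiplicative.toAdd a).val + (Multiplicative.toAdd b).val) % 23) =
            σ ^ ((Multiplicative.toAdd a).val + (Multiplicative.toAdd b).val) := by
          conv_rhs => rw [← pow_mod_orderOf]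
          rw [hord]
        simp only [Function.comp, h1, h2, pow_add, Equiv.Perm.mul_apply]
        rw [← Equiv.Perm.mul_apply, ← Equiv.Perm.mul_apply, pow_mul_comm] }
  -- no fixed points of the action
  haveI hempty : IsEmpty (MulAction.fixedPoints (Multiplicative (ZMod 23)) α) := by
    constructor
    rintro ⟨v, hvfix⟩
    have h0 := MulAction.mem_fixedPoints.1 hvfix (Multiplicative.ofAdd (1 : ZMod 23))
    have h1 : v.1 ∘ ⇑(σ ^ (Multiplicative.toAdd (Multiplicative.ofAdd (1 : ZMod 23))).val) = v.1 :=
      congrArg Subtype.val h0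
    have h2 : (Multiplicative.toAdd (Multiplicative.ofAdd (1 : ZMod 23))).val = 1 := by
      simp [ZMod.val_one]
    rw [h2, pow_one] at h1
    exact hnofix v.1 v.2.2 h1
  have hpg : IsPGroup 23 (Multiplicative (ZMod 23)) := by
    apply IsPGroup.of_card (n := 1)
    rw [Nat.card_eq_fintype_card]
    simp [ZMod.card]
  have hmod := hpg.card_modEq_card_fixedPoints α
  have hzero : Nat.card (MulAction.fixedPoints (Multiplicative (ZMod 23)) α) = 0 :=
    Nat.card_of_isEmpty
  rw [hzero] at hmod
  have hdvd : 23 ∣ Nat.card α := (Nat.modEq_zero_iff_dvd).1 hmod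
  have hcard : Set.ncard {v | v ∈ C ∧ wt v = 10} = Nat.card α := by
    rw [← Nat.card_coe_set_eq]
    rfl
  rw [hcard] at hA10
  obtain ⟨k, hk⟩ := hdvd
  rcases hA10 with h | h <;> omega
end

section
/- Let C be a binary code of length n = pc + f with an automorphism σ consisting of c cycles of length p (an odd prime) followed by f fixed points, and suppose dim C = n/2. If C is self-dual (with respect to the standard dot product), then the projection C_π = π(F_σ(C)) ⊆ F_2^(c+f) is a binary self-dual code of length c + f. -/
/-!
A `σ`-fixed vector is constant on each cycle, so it is recovered from its image under `π`, and,
`p` being odd, `π` preserves the dot product of fixed vectors; hence `π(F_σ(C))` is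
self-orthogonal. Conversely, lift `w ⊥ π(F_σ(C))` to the fixed vector `v` constant on cycles.
For `x ∈ C` the trace `∑_{k<p} x ∘ σ^k` lies in `F_σ(C)`, and since `v` is fixed,
`v · trace x = p (v · x) = v · x`; so `v · x = w · π(trace x) = 0`, i.e. `v ∈ C^⊥ = C`.
-/

open Finset

/-- Coordinate index set for an automorphism of type p-(c,f): `c` cycles of
length `p` followed by `f` fixed points. -/
abbrev Idx (p c f : ℕ) : Type := (Fin c × Fin p) ⊕ Fin f

/-- The standard permutation with `c` cycles of length `p` and `f` fixed points. -/
def stdPerm (p c f : ℕ) : Equiv.Perm (Idx p c f) :=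
  Equiv.sumCongr (Equiv.prodCongr (Equiv.refl (Fin c)) (finRotate p)) (Equiv.refl (Fin f))

/-- The projection π recording one bit per cycle and the fixed-point bits. -/
def proj (p c f : ℕ) [NeZero p] :
    (Idx p c f → ZMod 2) →ₗ[ZMod 2] ((Fin c ⊕ Fin f) → ZMod 2) where
  toFun v := Sum.elim (fun j => v (Sum.inl (j, 0))) (fun l => v (Sum.inr l))
  map_add' := by intro a b; funext i; cases i <;> simp
  map_smul' := by intro r a; funext i; cases i <;> simp

theorem comp_pow_eq_of_comp_eq {ι β : Type*} {σ : Equiv.Perm ι} {u : ι → β} (h : u ∘ σ = u)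
    (k : ℕ) : u ∘ ⇑(σ ^ k) = u := by
  induction k with
  | zero => rfl
  | succ k ih => rw [pow_succ, Equiv.Perm.coe_mul, ← Function.comp_assoc, ih, h]

section OrbitSum

variable {ι R : Type*} [CommRing R] {σ : Equiv.Perm ι}

variable (σ) in
def orbitSum (m : ℕ) (x : ι → R) : ι → R :=
  ∑ k ∈ range m, x ∘ ⇑(σ ^ k)

theorem orbitSum_comp_eq {m : ℕ} (hm : σ ^ m = 1) (x : ι → R) :
    orbitSum σ m x ∘ σ = orbitSum σ m x := by
  funext i
  let g : ℕ → R := fun k => x ((σ ^ k) i)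
  have hshift : ∑ k ∈ range m, g (k + 1) = ∑ k ∈ range m, g k := by
    have hcycle : g m = g 0 := by simp only [g, hm, pow_zero]
    have := (sum_range_succ' g m).symm.trans (sum_range_succ g m)
    rw [hcycle] at this
    exact add_right_cancel this
  simpa [orbitSum, Finset.sum_apply, g, pow_succ] using hshift

theorem orbitSum_mem {C : Submodule R (ι → R)} (hC : ∀ v ∈ C, v ∘ σ ∈ C) (m : ℕ)
    {x : ι → R} (hx : x ∈ C) : orbitSum σ m x ∈ C := by
  have hpow : ∀ k, x ∘ ⇑(σ ^ k) ∈ C := by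
    intro k
    induction k with
    | zero => exact hx
    | succ k ih =>
      rw [pow_succ, Equiv.Perm.coe_mul, ← Function.comp_assoc]
      exact hC _ ih
  exact C.sum_mem fun k _ => hpow k

theorem dotProduct_orbitSum [Fintype ι] {v : ι → R} (hv : v ∘ σ = v) (m : ℕ) (x : ι → R) :
    v ⬝ᵥ orbitSum σ m x = m • (v ⬝ᵥ x) := by
  have hterm : ∀ k, v ⬝ᵥ x ∘ ⇑(σ ^ k) = v ⬝ᵥ x := fun k => by
    conv_lhs => rw [← comp_pow_eq_of_comp_eq hv k]
    exact comp_equiv_dotProduct_comp_equiv _ _ (σ ^ k)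
  simp only [orbitSum, dotProduct_sum, hterm, sum_const, card_range]

end OrbitSum

theorem finRotate_pow_self (n : ℕ) : finRotate n ^ n = 1 := by
  rcases lt_or_ge n 2 with hn | hn
  · interval_cases n <;> simp [finRotate_one, Equiv.Perm.one_def]
  · have horder : orderOf (finRotate n) = n := by
      rw [← Equiv.Perm.lcm_cycleType, cycleType_finRotate_of_le hn, Multiset.lcm_singleton,
        normalize_eq]
    simpa [horder] using pow_orderOf_eq_one (finRotate n)

theorem stdPerm_pow (p c f k : ℕ) :
    stdPerm p c f ^ k = Equiv.sumCongr (Equiv.prodCongr (Equiv.refl (Fin c)) (finRotate p ^ k))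
      (Equiv.refl (Fin f)) := by
  induction k with
  | zero => ext (⟨j, i⟩ | l) <;> rfl
  | succ k ih => rw [pow_succ, ih]; ext (⟨j, i⟩ | l) <;> rfl

theorem stdPerm_pow_self (p c f : ℕ) : stdPerm p c f ^ p = 1 := by
  rw [stdPerm_pow, finRotate_pow_self]
  ext (⟨j, i⟩ | l) <;> rfl

def spread (p c f : ℕ) (w : (Fin c ⊕ Fin f) → ZMod 2) : Idx p c f → ZMod 2 :=
  Sum.elim (fun jk => w (Sum.inl jk.1)) (w ∘ Sum.inr)

theorem spread_comp_stdPerm (p c f : ℕ) (w : (Fin c ⊕ Fin f) → ZMod 2) :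
    spread p c f w ∘ stdPerm p c f = spread p c f w := by
  ext (⟨j, i⟩ | l) <;> rfl

theorem proj_spread (p c f : ℕ) [NeZero p] (w : (Fin c ⊕ Fin f) → ZMod 2) :
    proj p c f (spread p c f w) = w := by
  ext (j | l) <;> rfl

theorem spread_proj_of_comp_eq {p c f : ℕ} [NeZero p] {u : Idx p c f → ZMod 2}
    (hu : u ∘ stdPerm p c f = u) : spread p c f (proj p c f u) = u := by
  ext (⟨j, k⟩ | l)
  · have hk : (finRotate p ^ k.val) 0 = k := by
      rw [Equiv.Perm.coe_pow, ← finCycle_eq_finRotate_iterate, finCycle_apply, zero_add]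
    have := congrFun (comp_pow_eq_of_comp_eq hu k.val) (Sum.inl (j, 0))
    rw [Function.comp_apply, stdPerm_pow] at this
    simpa [spread, proj, hk] using this.symm
  · rfl

theorem spread_dotProduct_spread {p c f : ℕ} (hodd : Odd p) (a b : (Fin c ⊕ Fin f) → ZMod 2) :
    spread p c f a ⬝ᵥ spread p c f b = a ⬝ᵥ b := by
  rw [spread, spread, sumElim_dotProduct_sumElim, ← Sum.elim_comp_inl_inr a,
    ← Sum.elim_comp_inl_inr b, sumElim_dotProduct_sumElim]
  simp [dotProduct, Fintype.sum_prod_type, hodd.natCast_zmod_two]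

theorem dotProduct_eq_proj_dotProduct_proj {p c f : ℕ} [NeZero p] (hodd : Odd p)
    {u v : Idx p c f → ZMod 2} (hu : u ∘ stdPerm p c f = u) (hv : v ∘ stdPerm p c f = v) :
    u ⬝ᵥ v = proj p c f u ⬝ᵥ proj p c f v := by
  rw [← spread_dotProduct_spread hodd, spread_proj_of_comp_eq hu, spread_proj_of_comp_eq hv]

theorem mem_dualCode {ι : Type*} [Fintype ι] {C : Submodule (ZMod 2) (ι → ZMod 2)}
    {x : ι → ZMod 2} : x ∈ dualCode C ↔ ∀ y ∈ C, x ⬝ᵥ y = 0 := Iff.rfl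

theorem statement10_general {p c f : ℕ} [NeZero p] (hodd : Odd p)
    (C : Submodule (ZMod 2) (Idx p c f → ZMod 2))
    (hself : C = dualCode C)
    (haut : ∀ v, v ∈ C ↔ v ∘ (stdPerm p c f) ∈ C) :
    Submodule.map (proj p c f) (fixedCode (stdPerm p c f) C) =
      dualCode (Submodule.map (proj p c f) (fixedCode (stdPerm p c f) C)) := by
  have hC : ∀ x ∈ C, ∀ y ∈ C, x ⬝ᵥ y = 0 := fun x hx => mem_dualCode.mp (hself ▸ hx)
  apply le_antisymm
  · rintro _ ⟨u, ⟨huC, hu⟩, rfl⟩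
    refine mem_dualCode.mpr ?_
    rintro _ ⟨x, ⟨hxC, hx⟩, rfl⟩
    rw [← dotProduct_eq_proj_dotProduct_proj hodd hu hx]
    exact hC u huC x hxC
  · intro w hw
    refine ⟨spread p c f w, ⟨?_, spread_comp_stdPerm p c f w⟩, proj_spread p c f w⟩
    rw [hself, mem_dualCode]
    intro x hx
    have htrace : orbitSum (stdPerm p c f) p x ∈ fixedCode (stdPerm p c f) C :=
      ⟨orbitSum_mem (fun v => (haut v).mp) p hx, orbitSum_comp_eq (stdPerm_pow_self p c f) x⟩
    calc spread p c f w ⬝ᵥ x = spread p c f w ⬝ᵥ orbitSum (stdPerm p c f) p x := by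
          rw [dotProduct_orbitSum (spread_comp_stdPerm p c f w), nsmul_eq_mul,
            hodd.natCast_zmod_two, one_mul]
      _ = w ⬝ᵥ proj p c f (orbitSum (stdPerm p c f) p x) := by
          rw [dotProduct_eq_proj_dotProduct_proj hodd (spread_comp_stdPerm p c f w) htrace.2,
            proj_spread]
      _ = 0 := hw _ ⟨_, htrace, rfl⟩

/-- If a binary self-dual code of length `n = p*c + f` is invariant under the standard
permutation with `c` cycles of odd prime length `p` and `f` fixed points, then the
projection `C_π = π(F_σ(C))` is a binary self-dual code of length `c + f`. -/
theorem statement10 {p c f : ℕ} [NeZero p] (hp : p.Prime) (hodd : Odd p)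
    (C : Submodule (ZMod 2) (Idx p c f → ZMod 2))
    (hself : C = dualCode C)
    (haut : ∀ v, v ∈ C ↔ v ∘ (stdPerm p c f) ∈ C) :
    Submodule.map (proj p c f) (fixedCode (stdPerm p c f) C) =
      dualCode (Submodule.map (proj p c f) (fixedCode (stdPerm p c f) C)) :=
  statement10_general hodd C hself haut
end

section
/- Let C be a binary self-dual [48,24,10] code with a fixed-point-free automorphism σ of order 3 (sixteen 3-cycles). Then C_φ = φ(E_σ(C)^*) is a Hermitian self-dual code of length 16 and dimension 8 over F_4 (identified with the even-weight subring P of F_2[x]/(x^3-1)) with minimum distance at least 5, because each nonzero element of P corresponds to a binary triple of weight 2 and the minimum binary weight 10 forces 2·d(C_φ) ≥ 10. -/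
open scoped Classical

open Finset

open Polynomial

/-- The ring F_2[x]/(x^p - 1). -/
abbrev Rp (p : ℕ) : Type :=
  Polynomial (ZMod 2) ⧸ Ideal.span {(Polynomial.X : Polynomial (ZMod 2)) ^ p - 1}

/-- The quotient map F_2[x] → F_2[x]/(x^p - 1). -/
noncomputable def mkp (p : ℕ) : Polynomial (ZMod 2) →+* Rp p := Ideal.Quotient.mk _

/-- The ideal P of even-weight elements of F_2[x]/(x^p-1), generated by x - 1. -/
noncomputable def evenIdeal (p : ℕ) : Ideal (Rp p) :=
  Ideal.span {mkp p (Polynomial.X - 1)}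

/-- Multiplication on (the subtype of) an ideal of a commutative ring. -/
noncomputable instance idealMul {R : Type*} [CommRing R] (I : Ideal R) : Mul I :=
  ⟨fun a b => ⟨a.1 * b.1, I.mul_mem_left a.1 b.2⟩⟩
/-- The map φ sending a binary vector to its tuple of cycle-block polynomials. -/
noncomputable def phiMap (p c f : ℕ) :
    (Idx p c f → ZMod 2) →ₗ[ZMod 2] (Fin c → Rp p) where
  toFun v := fun j => ∑ k : Fin p, v (Sum.inl (j, k)) • (mkp p X) ^ (k : ℕ)
  map_add' := by
    intro a b; funext j
    simp [add_smul, Finset.sum_add_distrib]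
  map_smul' := by
    intro r a; funext j
    simp [mul_smul, Finset.smul_sum]

/-!
Write a binary vector block by block, one block per 3-cycle, so that `φ` turns a block
`(v₀, v₁, v₂)` into `v₀ + v₁x + v₂x²`. Since squaring is the Frobenius and `x³ = 1`, the
coefficient of `xˢ` in `Σⱼ φ(a)ⱼ φ(b)ⱼ²` is the binary inner product of `a` with `b ∘ σ^(2s)`.
For `a, b ∈ C` all of these vanish (`C` is self-dual and `σ`-invariant), which gives Hermitian
self-orthogonality. Conversely, if `φ(a)` has even blocks and is Hermitian-orthogonal to
`C_φ`, the constant coefficient shows `a ⊥ E_σ(C)`; every `c ∈ C` differs from an element of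
`E_σ(C)` by a vector that is constant on cycles, and such vectors are orthogonal to `a`, so
`a ∈ C^⊥ = C`.

The cycle-sum map `C → F₂¹⁶` has kernel `E_σ(C)`, and its image is self-dual (the lift of a
vector orthogonal to the image is orthogonal to `C`), hence of dimension 8; so
`dim E_σ(C) = 24 - 8 = 16`. Finally an even block has at most two nonzero entries, so
`wt a ≤ 2 · wt φ(a)` and the minimum weight 10 of `C` gives distance at least 5.
-/

section Rp

variable {p : ℕ}

lemma mkp_X_pow_self : mkp p X ^ p = 1 := by
  rw [← map_pow, ← sub_eq_zero, ← map_one (mkp p), ← map_sub, mkp,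
    Ideal.Quotient.eq_zero_iff_mem]
  exact Ideal.subset_span rfl

variable (p) in
noncomputable def powBasis [NeZero p] : Module.Basis (Fin p) (ZMod 2) (Rp p) :=
  let pb : PowerBasis (ZMod 2) (Rp p) :=
    AdjoinRoot.powerBasis' (monic_X_pow_sub_C (1 : ZMod 2) (NeZero.ne p))
  pb.basis.reindex (finCongr (natDegree_X_pow_sub_C : (X ^ p - C 1 : (ZMod 2)[X]).natDegree = p))

lemma powBasis_apply [NeZero p] (k : Fin p) : powBasis p k = mkp p X ^ (k : ℕ) := by
  simp only [powBasis, Module.Basis.reindex_apply]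
  -- `Rp p` and `AdjoinRoot (X ^ p - C 1)` agree only up to unfolding, hence `erw`.
  erw [PowerBasis.coe_basis]
  rfl

lemma smul_eq_mkp_C_mul (a : ZMod 2) (y : Rp p) : a • y = mkp p (C a) * y :=
  Algebra.smul_def a y

variable (p) in
noncomputable def evalOne : Rp p →+* ZMod 2 :=
  Ideal.Quotient.lift _ (evalRingHom 1) fun q hq => by
    obtain ⟨r, rfl⟩ := Ideal.mem_span_singleton'.mp hq
    simp

lemma evalOne_mkp (q : (ZMod 2)[X]) : evalOne p (mkp p q) = q.eval 1 := rfl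

lemma evalOne_eq_zero_of_mem_evenIdeal {z : Rp p} (hz : z ∈ evenIdeal p) : evalOne p z = 0 := by
  obtain ⟨r, rfl⟩ := Ideal.mem_span_singleton'.mp hz
  simp [evalOne_mkp]

lemma evalOne_sum_smul_pow (A : Fin p → ZMod 2) :
    evalOne p (∑ k, A k • mkp p X ^ (k : ℕ)) = ∑ k, A k := by
  simp [smul_eq_mkp_C_mul, evalOne_mkp]

lemma sum_smul_pow_mem_evenIdeal (A : Fin p → ZMod 2) (hA : ∑ k, A k = 0) :
    ∑ k, A k • mkp p X ^ (k : ℕ) ∈ evenIdeal p := by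
  have hshift : ∑ k, A k • mkp p X ^ (k : ℕ) = ∑ k, A k • (mkp p X ^ (k : ℕ) - 1) := by
    simp only [smul_sub, sum_sub_distrib, ← sum_smul, hA, zero_smul, sub_zero]
  rw [hshift]
  refine sum_mem fun k _ => ?_
  rw [smul_eq_mkp_C_mul]
  refine Ideal.mul_mem_left _ _ (Ideal.mem_span_singleton.mpr ?_)
  simpa using sub_dvd_pow_sub_pow (mkp p X) 1 k

end Rp

section Blocks

open Fin.NatCast

variable {p c f : ℕ}

lemma phiMap_apply (v : Idx p c f → ZMod 2) (j : Fin c) :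
    phiMap p c f v j = ∑ k : Fin p, v (Sum.inl (j, k)) • mkp p X ^ (k : ℕ) :=
  rfl

lemma sum_smul_pow_eq_zero_iff [NeZero p] (A : Fin p → ZMod 2) :
    ∑ k, A k • mkp p X ^ (k : ℕ) = 0 ↔ A = 0 := by
  simpa [Module.Basis.equivFun_symm_apply, powBasis_apply] using
    (powBasis p).equivFun.symm.map_eq_zero_iff (x := A)

lemma phiMap_bijective [NeZero p] : Function.Bijective (phiMap p c 0) := by
  refine ⟨(injective_iff_map_eq_zero _).mpr fun v hv => ?_, fun u => ?_⟩
  · funext i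
    obtain ⟨j, k⟩ | l := i
    · exact congrFun ((sum_smul_pow_eq_zero_iff _).mp (congrFun hv j)) k
    · exact l.elim0
  · refine ⟨Sum.elim (fun jk => (powBasis p).repr (u jk.1) jk.2) Fin.elim0, funext fun j => ?_⟩
    simpa [phiMap_apply, powBasis_apply] using (powBasis p).sum_repr (u j)

lemma stdPerm_pow_inl [NeZero p] (n : ℕ) (j : Fin c) (k : Fin p) :
    (stdPerm p c f ^ n) (Sum.inl (j, k)) = Sum.inl (j, k + (n : Fin p)) := by
  induction n with
  | zero => simp
  | succ n ih =>
    rw [pow_succ', Equiv.Perm.mul_apply, ih]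
    simp [stdPerm, finRotate_apply, add_assoc]

lemma sum_range_stdPerm_pow_inl [NeZero p] {M : Type*} [AddCommMonoid M] (g : Idx p c f → M)
    (j : Fin c) (k : Fin p) :
    ∑ n ∈ range p, g ((stdPerm p c f ^ n) (Sum.inl (j, k))) = ∑ l, g (Sum.inl (j, l)) := by
  simp only [stdPerm_pow_inl]
  rw [← Fin.sum_univ_eq_sum_range (fun n => g (Sum.inl (j, k + n)))]
  simp only [Fin.cast_val_eq_self]
  exact Fintype.sum_equiv (Equiv.addLeft k) _ _ fun _ => rfl

lemma sum_idx_eq_sum_sum {M : Type*} [AddCommMonoid M] (g : Idx p c 0 → M) :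
    ∑ i, g i = ∑ j, ∑ k, g (Sum.inl (j, k)) := by
  simp [Fintype.sum_sum_type, Fintype.sum_prod_type]

end Blocks

section DualCode

variable {ι : Type*} [Fintype ι]

lemma mem_dualCode_iff {D : Submodule (ZMod 2) (ι → ZMod 2)} {x : ι → ZMod 2} :
    x ∈ dualCode D ↔ ∀ c ∈ D, x ⬝ᵥ c = 0 :=
  Iff.rfl

lemma finrank_dualCode_add_finrank (D : Submodule (ZMod 2) (ι → ZMod 2)) :
    Module.finrank (ZMod 2) (dualCode D) + Module.finrank (ZMod 2) D = Fintype.card ι := by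
  classical
  have hdual : dualCode D = D.dualAnnihilator.comap (dotProductEquiv (ZMod 2) ι).toLinearMap := by
    ext x
    simp [mem_dualCode_iff, Submodule.mem_dualAnnihilator]
  rw [hdual, Submodule.comap_equiv_eq_map_symm, LinearEquiv.finrank_map_eq, add_comm,
    Subspace.finrank_add_finrank_dualAnnihilator_eq, Module.finrank_fintype_fun_eq_card]

lemma dotProduct_eq_zero_of_mem {C : Submodule (ZMod 2) (ι → ZMod 2)} (hself : C = dualCode C)
    {a b : ι → ZMod 2} (ha : a ∈ C) (hb : b ∈ C) : a ⬝ᵥ b = 0 := by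
  rw [hself] at ha
  exact ha b hb

end DualCode

lemma comp_perm_pow_mem {R ι : Type*} [Semiring R] {σ : Equiv.Perm ι} {C : Submodule R (ι → R)}
    (hσ : ∀ v ∈ C, v ∘ σ ∈ C) {v : ι → R} (hv : v ∈ C) (n : ℕ) : v ∘ ⇑(σ ^ n) ∈ C := by
  induction n with
  | zero => simpa using hv
  | succ n ih => simpa [pow_succ, Function.comp_def] using hσ _ ih

section CycleSum

variable {p c : ℕ}

variable (p c) in
def cycleSum : (Idx p c 0 → ZMod 2) →ₗ[ZMod 2] (Fin c → ZMod 2) where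
  toFun v j := ∑ k, v (Sum.inl (j, k))
  map_add' v w := by funext j; simp [sum_add_distrib]
  map_smul' r v := by funext j; simp [mul_sum]

variable (p c) in
def cycleLift : (Fin c → ZMod 2) →ₗ[ZMod 2] (Idx p c 0 → ZMod 2) :=
  LinearMap.funLeft (ZMod 2) (ZMod 2) (Sum.elim Prod.fst Fin.elim0)

lemma cycleSum_apply (v : Idx p c 0 → ZMod 2) (j : Fin c) :
    cycleSum p c v j = ∑ k, v (Sum.inl (j, k)) :=
  rfl

lemma cycleLift_apply_inl (y : Fin c → ZMod 2) (j : Fin c) (k : Fin p) :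
    cycleLift p c y (Sum.inl (j, k)) = y j :=
  rfl

lemma cycleLift_dotProduct (y : Fin c → ZMod 2) (w : Idx p c 0 → ZMod 2) :
    cycleLift p c y ⬝ᵥ w = y ⬝ᵥ cycleSum p c w := by
  simp only [dotProduct, sum_idx_eq_sum_sum, cycleLift_apply_inl, cycleSum_apply, mul_sum]

lemma cycleSum_cycleLift (hp : Odd p) (y : Fin c → ZMod 2) :
    cycleSum p c (cycleLift p c y) = y := by
  funext j
  simp [cycleSum_apply, cycleLift_apply_inl, (ZMod.natCast_eq_one_iff_odd).mpr hp]

lemma sum_range_comp_stdPerm_pow [NeZero p] (v : Idx p c 0 → ZMod 2) :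
    ∑ n ∈ range p, v ∘ ⇑(stdPerm p c 0 ^ n) = cycleLift p c (cycleSum p c v) := by
  funext i
  obtain ⟨j, k⟩ | l := i
  · simp only [Finset.sum_apply, Function.comp_apply, sum_range_stdPerm_pow_inl,
      cycleLift_apply_inl, cycleSum_apply]
  · exact l.elim0

lemma mem_evenCode_iff [NeZero p] {C : Submodule (ZMod 2) (Idx p c 0 → ZMod 2)}
    {v : Idx p c 0 → ZMod 2} :
    v ∈ evenCode p (stdPerm p c 0) C ↔ v ∈ C ∧ cycleSum p c v = 0 := by
  refine and_congr_right fun _ => ⟨fun h => funext fun j => ?_, fun h i => ?_⟩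
  · rw [cycleSum_apply, ← sum_range_stdPerm_pow_inl v j 0]
    exact h _
  · obtain ⟨j, k⟩ | l := i
    · rw [sum_range_stdPerm_pow_inl, ← cycleSum_apply, h, Pi.zero_apply]
    · exact l.elim0

lemma evenCode_eq_inf_ker [NeZero p] (C : Submodule (ZMod 2) (Idx p c 0 → ZMod 2)) :
    evenCode p (stdPerm p c 0) C = C ⊓ LinearMap.ker (cycleSum p c) := by
  ext v
  rw [mem_evenCode_iff, Submodule.mem_inf, LinearMap.mem_ker]

lemma finrank_evenCode_add_finrank_map_cycleSum [NeZero p]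
    (C : Submodule (ZMod 2) (Idx p c 0 → ZMod 2)) :
    Module.finrank (ZMod 2) (evenCode p (stdPerm p c 0) C)
      + Module.finrank (ZMod 2) (C.map (cycleSum p c)) = Module.finrank (ZMod 2) C := by
  have h := LinearMap.finrank_range_add_finrank_ker (cycleSum p c ∘ₗ C.subtype)
  rw [LinearMap.range_comp, Submodule.range_subtype, LinearMap.ker_comp] at h
  rw [evenCode_eq_inf_ker, ← Submodule.map_comap_subtype, Submodule.finrank_map_subtype_eq]
  omega

lemma forall_phiMap_mem_evenIdeal_iff {a : Idx p c 0 → ZMod 2} :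
    (∀ j, phiMap p c 0 a j ∈ evenIdeal p) ↔ cycleSum p c a = 0 := by
  refine ⟨fun h => funext fun j => ?_, fun h j => sum_smul_pow_mem_evenIdeal _ (congrFun h j)⟩
  rw [cycleSum_apply, ← evalOne_sum_smul_pow]
  exact evalOne_eq_zero_of_mem_evenIdeal (h j)

end CycleSum

section SelfDual

variable {p c : ℕ} {C : Submodule (ZMod 2) (Idx p c 0 → ZMod 2)}

lemma cycleLift_cycleSum_mem [NeZero p] (haut : ∀ v ∈ C, v ∘ stdPerm p c 0 ∈ C)
    {v : Idx p c 0 → ZMod 2} (hv : v ∈ C) : cycleLift p c (cycleSum p c v) ∈ C := by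
  rw [← sum_range_comp_stdPerm_pow]
  exact sum_mem fun n _ => comp_perm_pow_mem haut hv n

lemma map_cycleSum_eq_dualCode (hp : Odd p) (hself : C = dualCode C)
    (haut : ∀ v ∈ C, v ∘ stdPerm p c 0 ∈ C) :
    C.map (cycleSum p c) = dualCode (C.map (cycleSum p c)) := by
  have : NeZero p := ⟨hp.pos.ne'⟩
  apply le_antisymm
  · rintro _ ⟨v, hv, rfl⟩
    rw [mem_dualCode_iff]
    rintro _ ⟨w, hw, rfl⟩
    rw [← cycleLift_dotProduct]
    exact dotProduct_eq_zero_of_mem hself (cycleLift_cycleSum_mem haut hv) hw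
  · intro y hy
    refine ⟨cycleLift p c y, ?_, cycleSum_cycleLift hp y⟩
    rw [SetLike.mem_coe, hself, mem_dualCode_iff]
    intro w hw
    rw [cycleLift_dotProduct]
    exact mem_dualCode_iff.mp hy _ ⟨w, hw, rfl⟩

lemma two_mul_finrank_map_cycleSum (hp : Odd p) (hself : C = dualCode C)
    (haut : ∀ v ∈ C, v ∘ stdPerm p c 0 ∈ C) :
    2 * Module.finrank (ZMod 2) (C.map (cycleSum p c)) = c := by
  have h := finrank_dualCode_add_finrank (C.map (cycleSum p c))
  rw [← map_cycleSum_eq_dualCode hp hself haut, Fintype.card_fin] at h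
  omega

lemma mem_of_cycleSum_eq_zero_of_orthogonal_evenCode (hp : Odd p) (hself : C = dualCode C)
    (haut : ∀ v ∈ C, v ∘ stdPerm p c 0 ∈ C) {a : Idx p c 0 → ZMod 2}
    (ha : cycleSum p c a = 0) (horth : ∀ e ∈ evenCode p (stdPerm p c 0) C, a ⬝ᵥ e = 0) :
    a ∈ C := by
  have : NeZero p := ⟨hp.pos.ne'⟩
  rw [hself, mem_dualCode_iff]
  intro w hw
  set w' := cycleLift p c (cycleSum p c w)
  have hw'e : w' - w ∈ evenCode p (stdPerm p c 0) C :=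
    mem_evenCode_iff.mpr ⟨sub_mem (cycleLift_cycleSum_mem haut hw) hw,
      by rw [map_sub, cycleSum_cycleLift hp, sub_self]⟩
  have hw' : a ⬝ᵥ w' = 0 := by
    rw [dotProduct_comm, cycleLift_dotProduct, ha, dotProduct_zero]
  calc a ⬝ᵥ w = a ⬝ᵥ w' - a ⬝ᵥ (w' - w) := by rw [dotProduct_sub, sub_sub_cancel]
    _ = 0 := by rw [hw', horth _ hw'e, sub_zero]

end SelfDual

section Hermitian

variable {c : ℕ} {C : Submodule (ZMod 2) (Idx 3 c 0 → ZMod 2)}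

lemma sum_smul_pow_mul_sq (A B : Fin 3 → ZMod 2) :
    (∑ k, A k • mkp 3 X ^ (k : ℕ)) * (∑ k, B k • mkp 3 X ^ (k : ℕ)) ^ 2
      = ∑ s : Fin 3, (∑ k, A k * B (k + 2 * s)) • mkp 3 X ^ (s : ℕ) := by
  have hx : mkp 3 X ^ 3 = 1 := mkp_X_pow_self
  have h2 : (2 : Rp 3) = 0 := by
    have h := congrArg (mkp 3 ∘ C) (ZMod.natCast_self 2)
    rwa [Function.comp_apply, map_natCast C, map_natCast, Function.comp_apply, map_zero, map_zero,
      Nat.cast_ofNat] at h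
  have hB : ∀ k, mkp 3 (C (B k)) ^ 2 = mkp 3 (C (B k)) := fun k => by
    rw [← map_pow, ← map_pow, ZMod.pow_card]
  simp only [Fin.sum_univ_three, smul_eq_mkp_C_mul, map_add, map_mul, Fin.isValue, Fin.reduceAdd,
    Fin.reduceMul, Fin.val_zero, Fin.val_one, Fin.val_two, pow_zero, pow_one, mul_one]
  set x := mkp 3 X
  set a₀ := mkp 3 (C (A 0))
  set a₁ := mkp 3 (C (A 1))
  set a₂ := mkp 3 (C (A 2))
  set b₀ := mkp 3 (C (B 0))
  set b₁ := mkp 3 (C (B 1))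
  set b₂ := mkp 3 (C (B 2))
  -- `(Σ bₗ xˡ)² = Σ bₗ x²ˡ` by Frobenius, and `x³ = 1` folds the exponents back below 3.
  linear_combination (a₀ + a₁ * x + a₂ * x ^ 2) * (hB 0 + x ^ 2 * hB 1 + x ^ 4 * hB 2 + b₂ * x * hx
      + (b₀ * b₁ * x + b₀ * b₂ * x ^ 2 + b₁ * b₂ * x ^ 3) * h2)
    + (a₁ * b₁ + a₂ * b₂ + a₂ * b₁ * x) * hx

open Fin.NatCast in
lemma sum_phiMap_mul_sq (a b : Idx 3 c 0 → ZMod 2) :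
    ∑ j, phiMap 3 c 0 a j * phiMap 3 c 0 b j ^ 2
      = ∑ s : Fin 3, (a ⬝ᵥ b ∘ ⇑(stdPerm 3 c 0 ^ (2 * (s : ℕ)))) • mkp 3 X ^ (s : ℕ) := by
  simp only [phiMap_apply, sum_smul_pow_mul_sq, dotProduct, sum_idx_eq_sum_sum, Function.comp_apply,
    stdPerm_pow_inl, sum_smul]
  rw [sum_comm]
  have hcast : ∀ s : Fin 3, ((2 * (s : ℕ) : ℕ) : Fin 3) = 2 * s := by decide
  simp only [hcast]

lemma sum_phiMap_mul_sq_eq_zero (hself : C = dualCode C)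
    (haut : ∀ v ∈ C, v ∘ stdPerm 3 c 0 ∈ C) {a b : Idx 3 c 0 → ZMod 2} (ha : a ∈ C)
    (hb : b ∈ C) : ∑ j, phiMap 3 c 0 a j * phiMap 3 c 0 b j ^ 2 = 0 := by
  rw [sum_phiMap_mul_sq]
  refine sum_eq_zero fun s _ => ?_
  rw [dotProduct_eq_zero_of_mem hself ha (comp_perm_pow_mem haut hb _), zero_smul]

lemma dotProduct_eq_zero_of_sum_phiMap_mul_sq_eq_zero {a b : Idx 3 c 0 → ZMod 2}
    (h : ∑ j, phiMap 3 c 0 a j * phiMap 3 c 0 b j ^ 2 = 0) : a ⬝ᵥ b = 0 := by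
  rw [sum_phiMap_mul_sq, sum_smul_pow_eq_zero_iff] at h
  simpa using congrFun h 0

end Hermitian

section Weight

variable {p c : ℕ}

lemma card_ne_zero_le_of_sum_eq_zero (hp : Odd p) {A : Fin p → ZMod 2} (hA : ∑ k, A k = 0) :
    #{k | A k ≠ 0} ≤ p - 1 := by
  suffices ∃ k, A k = 0 by
    obtain ⟨k, hk⟩ := this
    have : #{k | A k ≠ 0} < #(univ : Finset (Fin p)) :=
      card_lt_card (filter_ssubset.mpr ⟨k, mem_univ k, not_not.mpr hk⟩)
    rw [card_univ, Fintype.card_fin] at this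
    omega
  by_contra! h
  have hone : ∀ k, A k = 1 := fun k => Fin.eq_one_of_ne_zero _ (h k)
  simp [hone, ZMod.natCast_eq_one_iff_odd.mpr hp] at hA

lemma wt_le_mul_card_phiMap_ne_zero [NeZero p] (hp : Odd p) {a : Idx p c 0 → ZMod 2}
    (ha : cycleSum p c a = 0) : wt a ≤ (p - 1) * #{j | phiMap p c 0 a j ≠ 0} := by
  have hblock : ∀ j, #{k | a (Sum.inl (j, k)) ≠ 0} ≤ if phiMap p c 0 a j ≠ 0 then p - 1 else 0 := by
    intro j
    split_ifs with hj
    · exact card_ne_zero_le_of_sum_eq_zero hp (congrFun ha j)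
    · rw [not_not, phiMap_apply, sum_smul_pow_eq_zero_iff] at hj
      simp [funext_iff.mp hj]
  calc wt a = ∑ j, #{k | a (Sum.inl (j, k)) ≠ 0} := by
        simp only [wt, card_filter, sum_idx_eq_sum_sum]
    _ ≤ ∑ j, if phiMap p c 0 a j ≠ 0 then p - 1 else 0 := sum_le_sum fun j _ => hblock j
    _ = (p - 1) * #{j | phiMap p c 0 a j ≠ 0} := by
      rw [sum_ite, sum_const_zero, sum_const, smul_eq_mul, add_zero, mul_comm]

end Weight

theorem statement16_general
    (C : Submodule (ZMod 2) (Idx 3 16 0 → ZMod 2))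
    (hself : C = dualCode C)
    (hdim : Module.finrank (ZMod 2) C = 24)
    (hmin : ∀ v ∈ C, v ≠ 0 → 10 ≤ wt v)
    (haut : ∀ v, v ∈ C ↔ v ∘ (stdPerm 3 16 0) ∈ C) :
    (∀ u ∈ Submodule.map (phiMap 3 16 0) (evenCode 3 (stdPerm 3 16 0) C),
      ∀ j, u j ∈ evenIdeal 3) ∧
    (∀ u ∈ Submodule.map (phiMap 3 16 0) (evenCode 3 (stdPerm 3 16 0) C),
      ∀ v ∈ Submodule.map (phiMap 3 16 0) (evenCode 3 (stdPerm 3 16 0) C),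
        ∑ j, u j * (v j) ^ 2 = 0) ∧
    (∀ u : Fin 16 → Rp 3, (∀ j, u j ∈ evenIdeal 3) →
      (∀ v ∈ Submodule.map (phiMap 3 16 0) (evenCode 3 (stdPerm 3 16 0) C),
        ∑ j, u j * (v j) ^ 2 = 0) →
      u ∈ Submodule.map (phiMap 3 16 0) (evenCode 3 (stdPerm 3 16 0) C)) ∧
    Module.finrank (ZMod 2)
      (Submodule.map (phiMap 3 16 0) (evenCode 3 (stdPerm 3 16 0) C)) = 16 ∧
    (∀ u ∈ Submodule.map (phiMap 3 16 0) (evenCode 3 (stdPerm 3 16 0) C),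
      u ≠ 0 → 5 ≤ (Finset.univ.filter fun j => u j ≠ 0).card) := by
  have hσ : ∀ v ∈ C, v ∘ stdPerm 3 16 0 ∈ C := fun v hv => (haut v).mp hv
  have h3 : Odd 3 := by decide
  refine ⟨?_, ?_, ?_, ?_, ?_⟩
  · rintro _ ⟨a, ha, rfl⟩
    exact forall_phiMap_mem_evenIdeal_iff.mpr (mem_evenCode_iff.mp ha).2
  · rintro _ ⟨a, ha, rfl⟩ _ ⟨b, hb, rfl⟩
    exact sum_phiMap_mul_sq_eq_zero hself hσ (mem_evenCode_iff.mp ha).1 (mem_evenCode_iff.mp hb).1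
  · intro u hu horth
    obtain ⟨a, rfl⟩ := phiMap_bijective.2 u
    have ha : cycleSum 3 16 a = 0 := forall_phiMap_mem_evenIdeal_iff.mp hu
    have haC : a ∈ C := mem_of_cycleSum_eq_zero_of_orthogonal_evenCode h3 hself hσ ha
      fun e he => dotProduct_eq_zero_of_sum_phiMap_mul_sq_eq_zero (horth _ ⟨e, he, rfl⟩)
    exact ⟨a, mem_evenCode_iff.mpr ⟨haC, ha⟩, rfl⟩
  · rw [← (Submodule.equivMapOfInjective _ phiMap_bijective.1 _).finrank_eq]
    have := finrank_evenCode_add_finrank_map_cycleSum C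
    have := two_mul_finrank_map_cycleSum h3 hself hσ
    omega
  · rintro _ ⟨a, ha, rfl⟩ hne
    obtain ⟨haC, ha0⟩ := mem_evenCode_iff.mp ha
    have := hmin a haC (by rintro rfl; exact hne (map_zero _))
    have := wt_le_mul_card_phiMap_ne_zero h3 ha0
    omega

/-- For a binary self-dual [48,24,10] code `C` invariant under the standard fixed-point
free permutation of order 3 (sixteen 3-cycles), the code `C_φ = φ(E_σ(C))` has all its
coordinates in the field P = even-weight subring of F_2[x]/(x³-1) (≅ F_4), is self-dual
under the Hermitian form (u,v) = Σ uᵢvᵢ², has F_4-dimension 8 (i.e. F_2-dimension 16),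
and has minimum distance at least 5. -/
theorem statement16
    (C : Submodule (ZMod 2) (Idx 3 16 0 → ZMod 2))
    (hself : C = dualCode C)
    (hdim : Module.finrank (ZMod 2) C = 24)
    (hmin : ∀ v ∈ C, v ≠ 0 → 10 ≤ wt v) (hex : ∃ v ∈ C, wt v = 10)
    (haut : ∀ v, v ∈ C ↔ v ∘ (stdPerm 3 16 0) ∈ C) :
    (∀ u ∈ Submodule.map (phiMap 3 16 0) (evenCode 3 (stdPerm 3 16 0) C),
      ∀ j, u j ∈ evenIdeal 3) ∧
    (∀ u ∈ Submodule.map (phiMap 3 16 0) (evenCode 3 (stdPerm 3 16 0) C),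
      ∀ v ∈ Submodule.map (phiMap 3 16 0) (evenCode 3 (stdPerm 3 16 0) C),
        ∑ j, u j * (v j) ^ 2 = 0) ∧
    (∀ u : Fin 16 → Rp 3, (∀ j, u j ∈ evenIdeal 3) →
      (∀ v ∈ Submodule.map (phiMap 3 16 0) (evenCode 3 (stdPerm 3 16 0) C),
        ∑ j, u j * (v j) ^ 2 = 0) →
      u ∈ Submodule.map (phiMap 3 16 0) (evenCode 3 (stdPerm 3 16 0) C)) ∧
    Module.finrank (ZMod 2)
      (Submodule.map (phiMap 3 16 0) (evenCode 3 (stdPerm 3 16 0) C)) = 16 ∧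
    (∀ u ∈ Submodule.map (phiMap 3 16 0) (evenCode 3 (stdPerm 3 16 0) C),
      u ≠ 0 → 5 ≤ (Finset.univ.filter fun j => u j ≠ 0).card) :=
  statement16_general C hself hdim hmin haut
end
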